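/- arXiv:1808.04932 — 2 statements merged into one kernel-verified Lean document; each statement's English description precedes it below -/
import Mathlib

section
/- Let v be a vector indexed by [M]^D (index vectors n with entries in {0,...,M-1}) such that v_n = 0 whenever the number of nonzero entries of n exceeds d. Fix j in [D] and a prefix ñ in [M]^{j+1} with at most d nonzero entries. Then the vector v_{j;(ñ,...)} (whose entry at a suffix k in [M]^{D-j-1} equals v_{(ñ,k)} and which is zero elsewhere) has at most C(D-j-1, d - ||ñ||_0) * M^{min(d - ||ñ||_0, D-j-1)} nonzero entries, where C(p,q) is defined to be 1 whenever q ≥ p or q < 0. -/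
open Finset

/-- Binomial coefficient with the convention `C(p,q) = 1` whenever `q ≥ p` (or `q < 0`,
which cannot happen for natural numbers). -/
def chooseConv (p q : ℕ) : ℕ := if p ≤ q then 1 else p.choose q

/-- The `ℓ₀` norm: number of nonzero entries of an index vector. -/
def l0 {k M : ℕ} (n : Fin k → Fin M) : ℕ := (Finset.univ.filter (fun i => (n i : ℕ) ≠ 0)).card

lemma l0_append_ge {M j e : ℕ} (nt : Fin j → Fin M) (k : Fin e → Fin M) :
    l0 nt + l0 k ≤ l0 (Fin.append nt k) := by
  classical
  have hinj1 : Function.Injective (Fin.castAdd e : Fin j → Fin (j + e)) :=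
    Fin.castAdd_injective j e
  have hinj2 : Function.Injective (Fin.natAdd j : Fin e → Fin (j + e)) := by
    intro a b h
    have := congrArg Fin.val h
    simp [Fin.natAdd] at this
    exact Fin.val_injective this
  set A := (Finset.univ.filter (fun i => (nt i : ℕ) ≠ 0)).image (Fin.castAdd e)
  set B := (Finset.univ.filter (fun i => (k i : ℕ) ≠ 0)).image (Fin.natAdd j)
  have hdisj : Disjoint A B := by
    rw [Finset.disjoint_left]
    rintro x hx hy
    simp only [A, B, Finset.mem_image] at hx hy
    obtain ⟨a, _, rfl⟩ := hx
    obtain ⟨b, _, hb⟩ := hy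
    have := congrArg Fin.val hb
    simp only [Fin.coe_natAdd, Fin.coe_castAdd] at this
    omega
  have hsub : A ∪ B ⊆ Finset.univ.filter (fun i => ((Fin.append nt k) i : ℕ) ≠ 0) := by
    intro x hx
    rcases Finset.mem_union.1 hx with h | h
    · simp only [A, Finset.mem_image, Finset.mem_filter] at h
      obtain ⟨a, ⟨_, ha⟩, rfl⟩ := h
      simp [Fin.append_left, ha]
    · simp only [B, Finset.mem_image, Finset.mem_filter] at h
      obtain ⟨b, ⟨_, hb⟩, rfl⟩ := h
      simp [Fin.append_right, hb]
  have := Finset.card_le_card hsub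
  rw [Finset.card_union_of_disjoint hdisj, Finset.card_image_of_injective _ hinj1,
    Finset.card_image_of_injective _ hinj2] at this
  exact this

lemma card_l0_le {M e r : ℕ} (hre : r < e) :
    (Finset.univ.filter (fun k : Fin e → Fin M => l0 k ≤ r)).card ≤ e.choose r * M ^ r := by
  classical
  set T := (Finset.univ.powersetCard r).biUnion
    (fun S : Finset (Fin e) => Finset.univ.filter (fun k : Fin e → Fin M => ∀ i ∉ S, (k i : ℕ) = 0))
  have hsub : (Finset.univ.filter (fun k : Fin e → Fin M => l0 k ≤ r)) ⊆ T := by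
    intro k hk
    simp only [Finset.mem_filter, Finset.mem_univ, true_and] at hk
    obtain ⟨S, hS1, hS2, hS3⟩ := Finset.exists_subsuperset_card_eq
      (Finset.subset_univ (Finset.univ.filter (fun i => (k i : ℕ) ≠ 0))) hk
      (by simp [Finset.card_univ]; omega)
    refine Finset.mem_biUnion.2 ⟨S, ?_, ?_⟩
    · rw [Finset.mem_powersetCard]; exact ⟨hS2, hS3⟩
    · simp only [Finset.mem_filter, Finset.mem_univ, true_and]
      intro i hi
      by_contra h
      exact hi (hS1 (by simp [h]))
  calc (Finset.univ.filter (fun k : Fin e → Fin M => l0 k ≤ r)).card ≤ T.card :=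
        Finset.card_le_card hsub
    _ ≤ ∑ S ∈ Finset.univ.powersetCard r, (Finset.univ.filter
          (fun k : Fin e → Fin M => ∀ i ∉ S, (k i : ℕ) = 0)).card := Finset.card_biUnion_le
    _ ≤ ∑ S ∈ Finset.univ.powersetCard r, M ^ r := by
        refine Finset.sum_le_sum fun S hS => ?_
        have hScard : S.card = r := (Finset.mem_powersetCard.1 hS).2
        have : (Finset.univ.filter (fun k : Fin e → Fin M => ∀ i ∉ S, (k i : ℕ) = 0)).card
            ≤ (Finset.univ : Finset ({i // i ∈ S} → Fin M)).card := by
          apply Finset.card_le_card_of_injOn (fun k => fun i => k i.1) (fun _ _ => Finset.mem_univ _)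
          intro k1 h1 k2 h2 heq
          simp only [Finset.mem_coe, Finset.mem_filter, Finset.mem_univ, true_and] at h1 h2
          funext i
          by_cases hi : i ∈ S
          · exact congrFun heq ⟨i, hi⟩
          · exact Fin.val_injective ((h1 i hi).trans (h2 i hi).symm)
        simpa [Finset.card_univ, hScard] using this
    _ = e.choose r * M ^ r := by
        rw [Finset.sum_const, Finset.card_powersetCard, Finset.card_univ]
        simp [mul_comm, Fintype.card_fin]

theorem stmt0 (M d j e : ℕ)
    (v : (Fin (j + 1 + e) → Fin M) → ℂ)
    (hv : ∀ n, d < l0 n → v n = 0)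
    (nt : Fin (j + 1) → Fin M) (hnt : l0 nt ≤ d) :
    (Finset.univ.filter (fun k : Fin e → Fin M => v (Fin.append nt k) ≠ 0)).card
      ≤ chooseConv e (d - l0 nt) * M ^ (min (d - l0 nt) e) := by
  classical
  set r := d - l0 nt with hr
  have key : ∀ k : Fin e → Fin M, v (Fin.append nt k) ≠ 0 → l0 k ≤ r := by
    intro k hk
    by_contra h
    push_neg at h
    have h1 : d < l0 (Fin.append nt k) := by
      have := l0_append_ge nt k
      omega
    exact hk (hv _ h1)
  have hsub : (Finset.univ.filter (fun k : Fin e → Fin M => v (Fin.append nt k) ≠ 0))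
      ⊆ Finset.univ.filter (fun k : Fin e → Fin M => l0 k ≤ r) := by
    intro k hk
    simp only [Finset.mem_filter, Finset.mem_univ, true_and] at hk ⊢
    exact key k hk
  refine (Finset.card_le_card hsub).trans ?_
  rcases le_or_gt e r with h | h
  · have : chooseConv e r = 1 := by simp [chooseConv, h]
    rw [this, min_eq_right h, one_mul]
    calc (Finset.univ.filter (fun k : Fin e → Fin M => l0 k ≤ r)).card
        ≤ (Finset.univ : Finset (Fin e → Fin M)).card := Finset.card_le_card (Finset.filter_subset _ _)
      _ = M ^ e := by simp [Finset.card_univ]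
  · have h1 : chooseConv e r = e.choose r := by simp [chooseConv, Nat.not_le.2 h]
    rw [h1, min_eq_left h.le]
    exact card_l0_le h
end

section
/- Fix α > 1, č > √2 with (as real numbers) √((1+δ')/(1−δ')) < č/α − 1 for some δ' ∈ (0,1), and let δ̃ ≤ 1/(č√s). Let r ∈ ℂ^N with ||r||₂ > 0, and suppose energy estimates E_ñ satisfy (1−δ')(max{0, ||r_{(ñ)}||₂ − δ̃||r||₂})² ≤ E_ñ ≤ (1+δ')(||r_{(ñ)}||₂ + δ̃||r||₂)². Then whenever ||r_{(ñ)}||₂ = 0 and ||r_{(ñ')}||₂² ≥ ||r||₂²/(α²s), one has E_ñ < E_{ñ'}. In other words, the estimator strictly separates zero-energy prefixes from prefixes of energy at least ||r||₂²/(α²s). -/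
/-!
With `A = R / (c √s)` the noise term satisfies `δt R ≤ A`. A zero-energy prefix therefore gets an
estimate at most `(1 + δ') A²`, while a prefix with `nr ≥ R / (α √s) = (c / α) A` keeps at least
`(c / α - 1) A` after subtracting the noise, hence gets an estimate at least
`(1 - δ') ((c / α - 1) A)²`. The separation condition `√((1 + δ') / (1 - δ')) < c / α - 1` is
exactly what makes the first bound smaller than the second.
-/

open Real

theorem one_add_mul_sq_lt_one_sub_mul_sq {δ κ x : ℝ} (hδ : δ < 1)
    (hκ : √((1 + δ) / (1 - δ)) < κ) (hx : 0 < x) :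
    (1 + δ) * x ^ 2 < (1 - δ) * (κ * x) ^ 2 := by
  have hκ0 : 0 < κ := (sqrt_nonneg _).trans_lt hκ
  have hratio : 1 + δ < κ ^ 2 * (1 - δ) :=
    (div_lt_iff₀ (by linarith)).1 ((sqrt_lt' hκ0).1 hκ)
  calc (1 + δ) * x ^ 2 < κ ^ 2 * (1 - δ) * x ^ 2 := by gcongr
    _ = (1 - δ) * (κ * x) ^ 2 := by ring

theorem div_mul_sqrt_le_of_sq_div_le {R α s x : ℝ} (hs : 0 ≤ s) (hx : 0 ≤ x)
    (h : R ^ 2 / (α ^ 2 * s) ≤ x ^ 2) : R / (α * √s) ≤ x := by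
  refine le_of_sq_le_sq ?_ hx
  rwa [div_pow, mul_pow, sq_sqrt hs]

theorem stmt15_general (I : Type) (s : ℕ) (hs : 1 ≤ s)
    (α c δ' δt R : ℝ)
    (hα : 1 < α)
    (hδ'0 : 0 < δ') (hδ'1 : δ' < 1)
    (hsep : Real.sqrt ((1 + δ') / (1 - δ')) < c / α - 1)
    (hδt0 : 0 ≤ δt) (hδt : δt ≤ 1 / (c * Real.sqrt s))
    (hR : 0 < R)
    (nr : I → ℝ) (hnr : ∀ i, 0 ≤ nr i)
    (E : I → ℝ)
    (hE : ∀ i, (1 - δ') * (max 0 (nr i - δt * R)) ^ 2 ≤ E i ∧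
               E i ≤ (1 + δ') * (nr i + δt * R) ^ 2) :
    ∀ i i' : I, nr i = 0 → R ^ 2 / (α ^ 2 * s) ≤ (nr i') ^ 2 → E i < E i' := by
  intro i i' hzero hbig
  have hα0 : 0 < α := one_pos.trans hα
  have hκ : 0 < c / α - 1 := (sqrt_nonneg _).trans_lt hsep
  have hc0 : 0 < c := hα0.trans <| (one_lt_div hα0).1 (by linarith)
  have hsqrt : 0 < √(s : ℝ) := sqrt_pos.2 (by exact_mod_cast hs)
  set A := R / (c * √s)
  have hA : 0 < A := by positivity
  have hnoise : δt * R ≤ A := by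
    calc δt * R ≤ 1 / (c * √s) * R := by gcongr
      _ = A := by ring
  have hgap : (c / α - 1) * A ≤ nr i' - δt * R := by
    have hthreshold := div_mul_sqrt_le_of_sq_div_le (Nat.cast_nonneg s) (hnr i') hbig
    have hA_mul : R / (α * √s) = (c / α) * A := by simp only [A]; field_simp
    linarith
  calc E i ≤ (1 + δ') * (0 + δt * R) ^ 2 := hzero ▸ (hE i).2
    _ ≤ (1 + δ') * A ^ 2 := by rw [zero_add]; gcongr
    _ < (1 - δ') * ((c / α - 1) * A) ^ 2 := one_add_mul_sq_lt_one_sub_mul_sq hδ'1 hsep hA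
    _ ≤ (1 - δ') * (max 0 (nr i' - δt * R)) ^ 2 := by
        gcongr
        exact le_max_of_le_right hgap
    _ ≤ E i' := (hE i').1

/-- Separation of energy estimates: if the estimates `E ñ` satisfy the two-sided RIP-based
bounds, then every prefix with zero energy receives a strictly smaller estimate than any
prefix with energy at least `‖r‖₂²/(α²s)`. -/
theorem stmt15 (I : Type) (s : ℕ) (hs : 1 ≤ s)
    (α c δ' δt R : ℝ)
    (hα : 1 < α) (hc : Real.sqrt 2 < c)
    (hδ'0 : 0 < δ') (hδ'1 : δ' < 1)
    (hsep : Real.sqrt ((1 + δ') / (1 - δ')) < c / α - 1)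
    (hδt0 : 0 ≤ δt) (hδt : δt ≤ 1 / (c * Real.sqrt s))
    (hR : 0 < R)
    (nr : I → ℝ) (hnr : ∀ i, 0 ≤ nr i)
    (E : I → ℝ)
    (hE : ∀ i, (1 - δ') * (max 0 (nr i - δt * R)) ^ 2 ≤ E i ∧
               E i ≤ (1 + δ') * (nr i + δt * R) ^ 2) :
    ∀ i i' : I, nr i = 0 → R ^ 2 / (α ^ 2 * s) ≤ (nr i') ^ 2 → E i < E i' :=
  stmt15_general I s hs α c δ' δt R hα hδ'0 hδ'1 hsep hδt0 hδt hR nr hnr E hE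
end
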